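/- arXiv:2106.02335 — 5 statements merged into one kernel-verified Lean document; each statement's English description precedes it below -/
import Mathlib

section
/- Let v > 0 and h be real numbers, let e_i = (v,0), e_j = (-v,0), e_l = (0,0) in ℝ², and let γ = (x_γ, y_γ) be a point with y_γ ≠ 0. Let p_i, p_j, p_l be points of ℝ² whose second coordinate equals -h such that γ, e_i, p_i are collinear, γ, e_j, p_j are collinear, and γ, e_l, p_l are collinear. Then the first coordinates satisfy x(p_l) = (x(p_i) + x(p_j))/2. -/
lemma cross_of_collinear (a b c : ℝ × ℝ) (h : Collinear ℝ {a, b, c}) :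
    (b.1 - a.1) * (c.2 - a.2) - (b.2 - a.2) * (c.1 - a.1) = 0 := by
  obtain ⟨p₀, d, hd⟩ := (collinear_iff_exists_forall_eq_smul_vadd _).mp h
  obtain ⟨ta, ha⟩ := hd a (by simp)
  obtain ⟨tb, hb⟩ := hd b (by simp)
  obtain ⟨tc, hc⟩ := hd c (by simp)
  subst ha hb hc
  simp only [Prod.smul_fst, Prod.smul_snd, Prod.fst_add, Prod.snd_add, vadd_eq_add,
    smul_eq_mul]
  ring

/-- Lemma 3.6 (lem:additionPrin), first conclusion: with `e_i = (v,0)`, `e_j = (-v,0)`,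
`e_l = (0,0)` and a point `γ = (xγ, yγ)` with `yγ ≠ 0`, if `p_i, p_j, p_l` lie on the
horizontal line `y = -h` and are collinear with `γ` and `e_i`, `e_j`, `e_l` respectively,
then `x(p_l) = (x(p_i) + x(p_j)) / 2`. -/
theorem addition_principle_half (v h xγ yγ : ℝ) (hv : 0 < v) (hyγ : yγ ≠ 0)
    (pi pj pl : ℝ × ℝ)
    (hpi : pi.2 = -h) (hpj : pj.2 = -h) (hpl : pl.2 = -h)
    (hci : Collinear ℝ {((xγ, yγ) : ℝ × ℝ), ((v, 0) : ℝ × ℝ), pi})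
    (hcj : Collinear ℝ {((xγ, yγ) : ℝ × ℝ), ((-v, 0) : ℝ × ℝ), pj})
    (hcl : Collinear ℝ {((xγ, yγ) : ℝ × ℝ), ((0, 0) : ℝ × ℝ), pl}) :
    pl.1 = (pi.1 + pj.1) / 2 := by
  have h1 := cross_of_collinear _ _ _ hci
  have h2 := cross_of_collinear _ _ _ hcj
  have h3 := cross_of_collinear _ _ _ hcl
  simp only [hpi, hpj, hpl] at h1 h2 h3
  have key : yγ * (2 * pl.1 - pi.1 - pj.1) = 0 := by nlinarith [h1, h2, h3]
  have := mul_eq_zero.mp key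
  rcases this with h' | h'
  · exact absurd h' hyγ
  · linarith
end

section
/- Let v > 0 and h be real numbers, let e_i = (v,0), e_j = (-v,0), e_l = (0,0) in ℝ², and let γ = (x_γ, y_γ) be a point with y_γ ≠ 0. Let p_i and p_j be points of ℝ² whose second coordinate equals -h such that γ, e_i, p_i are collinear and γ, e_j, p_j are collinear, and let p'_l be a point whose second coordinate equals -2h such that γ, e_l, p'_l are collinear. Then x(p'_l) = x(p_i) + x(p_j). -/
lemma collinear_cross (a b c : ℝ × ℝ)
    (h : Collinear ℝ ({a, b, c} : Set (ℝ × ℝ))) :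
    (b.1 - a.1) * (c.2 - a.2) = (c.1 - a.1) * (b.2 - a.2) := by
  rw [collinear_iff_of_mem (show a ∈ ({a,b,c} : Set (ℝ × ℝ)) by simp)] at h
  obtain ⟨d, hd⟩ := h
  obtain ⟨tb, hb⟩ := hd b (by simp)
  obtain ⟨tc, hc⟩ := hd c (by simp)
  have hb1 : b.1 = tb * d.1 + a.1 := by rw [hb]; rfl
  have hb2 : b.2 = tb * d.2 + a.2 := by rw [hb]; rfl
  have hc1 : c.1 = tc * d.1 + a.1 := by rw [hc]; rfl
  have hc2 : c.2 = tc * d.2 + a.2 := by rw [hc]; rfl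
  rw [hb1, hb2, hc1, hc2]; ring

/-- Lemma 3.6 (lem:additionPrin), second conclusion: with `e_i = (v,0)`, `e_j = (-v,0)`,
`e_l = (0,0)` and a point `γ = (xγ, yγ)` with `yγ ≠ 0`, if `p_i, p_j` lie on the line
`y = -h` and are collinear with `γ` and `e_i`, `e_j` respectively, and `p'_l` lies on the
line `y = -2h` and is collinear with `γ` and `e_l`, then `x(p'_l) = x(p_i) + x(p_j)`. -/
theorem addition_principle_sum (v h xγ yγ : ℝ) (hv : 0 < v) (hyγ : yγ ≠ 0)
    (pi pj pl' : ℝ × ℝ)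
    (hpi : pi.2 = -h) (hpj : pj.2 = -h) (hpl' : pl'.2 = -(2 * h))
    (hci : Collinear ℝ {((xγ, yγ) : ℝ × ℝ), ((v, 0) : ℝ × ℝ), pi})
    (hcj : Collinear ℝ {((xγ, yγ) : ℝ × ℝ), ((-v, 0) : ℝ × ℝ), pj})
    (hcl : Collinear ℝ {((xγ, yγ) : ℝ × ℝ), ((0, 0) : ℝ × ℝ), pl'}) :
    pl'.1 = pi.1 + pj.1 := by
  have e1 := collinear_cross _ _ _ hci
  have e2 := collinear_cross _ _ _ hcj
  have e3 := collinear_cross _ _ _ hcl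
  simp only [hpi, hpj, hpl'] at e1 e2 e3
  apply mul_left_cancel₀ hyγ
  linear_combination e3 - e1 - e2
end

section
/- Let v > 0 and h > 0 be real numbers, let e_i = (v,0), e_j = (-v,0) in ℝ², and let γ = (x_γ, y_γ) be a point with y_γ > 0. Let g_i = (x_i, -h), g_j = (x_j, -h), and g_l = (x_l, -2h) be points such that γ, e_i, g_i are collinear and γ, e_j, g_j are collinear. Then γ lies on or to the left of the line through the origin and g_l, i.e. 2h·x_γ + y_γ·x_l ≤ 0, if and only if x_l ≤ x_i + x_j. -/
lemma cross_of_collinear_s2 (a b c hval xγ yγ : ℝ)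
    (hc : Collinear ℝ {((xγ, yγ) : ℝ × ℝ), ((a, c) : ℝ × ℝ), ((b, hval) : ℝ × ℝ)}) :
    (a - xγ) * (hval - yγ) - (b - xγ) * (c - yγ) = 0 := by
  obtain ⟨u, hu⟩ := (collinear_iff_of_mem (by simp : ((xγ, yγ) : ℝ × ℝ) ∈
      ({((xγ, yγ) : ℝ × ℝ), ((a, c) : ℝ × ℝ), ((b, hval) : ℝ × ℝ)} : Set (ℝ × ℝ)))).mp hc
  obtain ⟨r, hr⟩ := hu (a, c) (by simp)
  obtain ⟨s, hs⟩ := hu (b, hval) (by simp)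
  have hr1 : a = r * u.1 + xγ := congrArg Prod.fst hr
  have hr2 : c = r * u.2 + yγ := congrArg Prod.snd hr
  have hs1 : b = s * u.1 + xγ := congrArg Prod.fst hs
  have hs2 : hval = s * u.2 + yγ := congrArg Prod.snd hs
  subst hr1 hr2 hs1 hs2
  ring

/-- Geometric correctness of the ≥-addition gadget: with `e_i = (v,0)`, `e_j = (-v,0)`,
`γ = (xγ, yγ)` with `yγ > 0`, and points `g_i = (x_i, -h)`, `g_j = (x_j, -h)` collinear
with `γ, e_i` and `γ, e_j` respectively, the point `γ` lies on or to the left of the line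
through the origin and `g_l = (x_l, -2h)`, i.e. `2h·xγ + yγ·x_l ≤ 0`, if and only if
`x_l ≤ x_i + x_j`. -/
theorem addition_gadget_visibility (v h xγ yγ xi xj xl : ℝ)
    (hv : 0 < v) (hh : 0 < h) (hyγ : 0 < yγ)
    (hci : Collinear ℝ {((xγ, yγ) : ℝ × ℝ), ((v, 0) : ℝ × ℝ), ((xi, -h) : ℝ × ℝ)})
    (hcj : Collinear ℝ {((xγ, yγ) : ℝ × ℝ), ((-v, 0) : ℝ × ℝ), ((xj, -h) : ℝ × ℝ)}) :
    2 * h * xγ + yγ * xl ≤ 0 ↔ xl ≤ xi + xj := by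
  have h1 := cross_of_collinear_s2 v xi 0 (-h) xγ yγ hci
  have h2 := cross_of_collinear_s2 (-v) xj 0 (-h) xγ yγ hcj
  have hsum : yγ * (xi + xj) = -(2 * h * xγ) := by nlinarith [h1, h2]
  constructor
  · intro hle
    have : yγ * xl ≤ yγ * (xi + xj) := by linarith
    exact le_of_mul_le_mul_left this hyγ
  · intro hle
    nlinarith [mul_le_mul_of_nonneg_left hle hyγ.le]
end

section
/- There exists a constant K > 0 such that the following holds for all real Λ ≥ 2, λ > 0, and h with |h| ≤ 1. Let B = [-1/2, 1/2] × [-1/2, 1/2] ⊆ ℝ², let α = (1,1), let o = (0,0), and let d = (Λ, Λ + h). Let ô = (Λ+λ, (Λ+λ)(Λ+h)/Λ) (the intersection of the ray from o through d with the vertical line x = Λ+λ), and let B̂ be the axis-parallel square with center ô and side length λ/Λ. For a point p ∈ B, define p̂ = ô - (λ/Λ)·p (scalar multiple of p as a vector, subtracted from ô). Then for every p ∈ B, every point z that lies both on the ray from p through d and in B̂ satisfies: the distance from z to the line through p̂ with direction α is at most K·λ/Λ². -/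
/-!
Parametrise the ray as `z = p + t (d - p)` and put `τ = t - 1 - λ/Λ`. The first coordinate gives
`τ (Λ - p₀) = (z₀ - (Λ + λ)) + (λ/Λ) p₀`, and both terms on the right are at most `λ/(2Λ)` since
`z ∈ B̂`, so `|τ| ≤ 2λ/Λ²`. The point of the line through `p̂` with the same first coordinate as `z`
differs from `z` only in the second coordinate, by `τ (h + p₀ - p₁)`, which is at most `4λ/Λ²`.
-/

/-- A point of the Euclidean plane with given coordinates. -/
noncomputable def pt (a b : ℝ) : EuclideanSpace ℝ (Fin 2) :=
  (WithLp.equiv 2 (Fin 2 → ℝ)).symm ![a, b]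

@[simp]
lemma pt_apply_zero (a b : ℝ) : pt a b 0 = a := rfl

@[simp]
lemma pt_apply_one (a b : ℝ) : pt a b 1 = b := rfl

lemma infDist_le_abs_of_diagonal_line (z q : EuclideanSpace ℝ (Fin 2)) :
    Metric.infDist z {w | ∃ t : ℝ, w = q + t • pt 1 1} ≤ |(z 1 - z 0) - (q 1 - q 0)| := by
  set w := q + (z 0 - q 0) • pt 1 1
  have hw0 : z 0 - w 0 = 0 := by simp [w]
  have hw1 : z 1 - w 1 = (z 1 - z 0) - (q 1 - q 0) := by
    simp only [w, PiLp.add_apply, PiLp.smul_apply, pt_apply_one, smul_eq_mul]; ring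
  calc Metric.infDist z {w | ∃ t : ℝ, w = q + t • pt 1 1}
      ≤ dist z w := Metric.infDist_le_dist_of_mem ⟨z 0 - q 0, rfl⟩
    _ = |(z 1 - z 0) - (q 1 - q 0)| := by
      rw [EuclideanSpace.dist_eq, Fin.sum_univ_two, Real.dist_eq, Real.dist_eq, hw0, hw1]
      simp [Real.sqrt_sq_eq_abs]

lemma abs_ray_param_sub_le {Λ lam a t : ℝ} (hΛ : 1 ≤ Λ) (hlam : 0 ≤ lam) (ha : |a| ≤ 1 / 2)
    (hz : |a + t * (Λ - a) - (Λ + lam)| ≤ lam / Λ / 2) :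
    |t - 1 - lam / Λ| ≤ 2 * lam / Λ ^ 2 := by
  have hΛ0 : 0 < Λ := by linarith
  have hgap : Λ / 2 ≤ Λ - a := by linarith [(abs_le.mp ha).2]
  have hshift : |lam / Λ * a| ≤ lam / Λ / 2 := by
    rw [abs_mul, abs_of_nonneg (by positivity)]
    nlinarith [div_nonneg hlam hΛ0.le]
  have hprod : |t - 1 - lam / Λ| * (Λ - a) ≤ lam / Λ := by
    have hid : (t - 1 - lam / Λ) * (Λ - a) = (a + t * (Λ - a) - (Λ + lam)) + lam / Λ * a := by
      field_simp; ring
    rw [← abs_of_pos (by linarith : 0 < Λ - a), ← abs_mul, hid]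
    linarith [abs_add_le (a + t * (Λ - a) - (Λ + lam)) (lam / Λ * a)]
  rw [le_div_iff₀ (by positivity)]
  have : lam / Λ * Λ = lam := div_mul_cancel₀ lam hΛ0.ne'
  nlinarith [abs_nonneg (t - 1 - lam / Λ)]

/-- The projection lemma (Lemma 3.4 / lemma:proj): there is a universal constant `K > 0`
such that for all `Λ ≥ 2`, `λ > 0`, `|h| ≤ 1`, every point `p` in the unit square `B`
centered at the origin, and every point `z` lying both on the ray from `p` through
`d = (Λ, Λ + h)` and in the axis-parallel square `B̂` of side `λ/Λ` centered at
`ô = (Λ+λ, (Λ+λ)(Λ+h)/Λ)`, the Euclidean distance from `z` to the line through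
`p̂ = ô - (λ/Λ)·p` with direction `α = (1,1)` is at most `K·λ/Λ²`. -/
theorem projection_lemma :
    ∃ K : ℝ, 0 < K ∧
      ∀ (Λ lam h : ℝ), 2 ≤ Λ → 0 < lam → |h| ≤ 1 →
        ∀ p : EuclideanSpace ℝ (Fin 2),
          p 0 ∈ Set.Icc (-(1/2) : ℝ) (1/2) → p 1 ∈ Set.Icc (-(1/2) : ℝ) (1/2) →
        ∀ z : EuclideanSpace ℝ (Fin 2),
          (∃ t : ℝ, 0 ≤ t ∧ z = p + t • (pt Λ (Λ + h) - p)) →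
          |z 0 - (Λ + lam)| ≤ lam / Λ / 2 →
          |z 1 - (Λ + lam) * (Λ + h) / Λ| ≤ lam / Λ / 2 →
          Metric.infDist z
            {w : EuclideanSpace ℝ (Fin 2) | ∃ t : ℝ,
              w = (pt (Λ + lam) ((Λ + lam) * (Λ + h) / Λ) - (lam / Λ) • p) + t • pt 1 1}
            ≤ K * lam / Λ ^ 2 := by
  refine ⟨4, by norm_num, ?_⟩
  rintro Λ lam h hΛ hlam hh p hp0 hp1 _ ⟨t, -, rfl⟩ hz0 -
  set z := p + t • (pt Λ (Λ + h) - p)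
  set pHat := pt (Λ + lam) ((Λ + lam) * (Λ + h) / Λ) - (lam / Λ) • p
  have ha0 : |p 0| ≤ 1 / 2 := abs_le.mpr hp0
  have ha1 : |p 1| ≤ 1 / 2 := abs_le.mpr hp1
  have hτ : |t - 1 - lam / Λ| ≤ 2 * lam / Λ ^ 2 :=
    abs_ray_param_sub_le (by linarith) hlam.le ha0 (by simpa [z] using hz0)
  have hslope : |h + p 0 - p 1| ≤ 2 := by
    linarith [abs_sub (h + p 0) (p 1), abs_add_le h (p 0)]
  refine (infDist_le_abs_of_diagonal_line _ _).trans ?_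
  have hoffset : (z 1 - z 0) - (pHat 1 - pHat 0) = (t - 1 - lam / Λ) * (h + p 0 - p 1) := by
    simp only [z, pHat, PiLp.add_apply, PiLp.smul_apply, PiLp.sub_apply, pt_apply_one,
      pt_apply_zero, smul_eq_mul]
    field_simp
    ring
  rw [hoffset, abs_mul]
  calc |t - 1 - lam / Λ| * |h + p 0 - p 1| ≤ 2 * lam / Λ ^ 2 * 2 :=
        mul_le_mul hτ hslope (abs_nonneg _) (by positivity)
    _ = 4 * lam / Λ ^ 2 := by ring
end

section
/- Let y₀, y₁, y_d be real numbers with y₀ ≠ y_d and y₁ ≠ y_d. Let a₀, b₀, p₀ be points of ℝ² with second coordinate y₀ and a₀ ≠ b₀; let a₁, b₁, p₁ be points with second coordinate y₁ and a₁ ≠ b₁; let d₀, d₁ be points with second coordinate y_d. Let f₀, f₁, q be points of ℝ² such that: f₀, f₁, d₀ are NOT collinear; f₀, f₁, d₁ are NOT collinear; a₀, d₀, f₁ are collinear; b₀, d₀, f₀ are collinear; a₁, d₁, f₁ are collinear; b₁, d₁, f₀ are collinear; f₀, f₁, q are collinear; p₀, d₀, q are collinear; and q, d₁, p₁ are collinear.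 Then (x(p₀) - x(a₀))·(x(b₁) - x(a₁)) = (x(p₁) - x(a₁))·(x(b₀) - x(a₀)), i.e. p₀ divides the segment a₀b₀ in the same ratio as p₁ divides a₁b₁. -/
/-!
Write `[u, v]` for the planar cross product. If `p` and `a` on the line `y = y₀` are the
projections from a pivot `d` of `q` and `f₁`, then
`(x(p) - x(a)) (y(q) - y(d)) (y(f₁) - y(d)) = (y₀ - y(d)) [q - d, f₁ - d]`, and likewise for
`b` and `f₀`. As `q` lies on the line `f₀f₁`, the triangles `d q f₁` and `d f₀ f₁` share that
base line, so the ratio of their areas `[q - d, f₁ - d] / [f₀ - d, f₁ - d]` does not depend on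
`d`. Thus `(x(p₀) - x(a₀)) / (x(b₀) - x(a₀))` is this area ratio times
`(y(f₀) - y(d)) / (y(q) - y(d))`, and the latter factor is the same for both pivots exactly
because they have the same height.
-/

def cross (u v : ℝ × ℝ) : ℝ := u.1 * v.2 - u.2 * v.1

lemma Collinear.cross_sub_eq_zero {p d q : ℝ × ℝ} (h : Collinear ℝ {p, d, q}) :
    cross (p - d) (q - d) = 0 := by
  obtain ⟨v, hv⟩ := (collinear_iff_of_mem (by simp : d ∈ ({p, d, q} : Set _))).1 h
  obtain ⟨r, hr⟩ := hv p (by simp)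
  obtain ⟨t, ht⟩ := hv q (by simp)
  rw [hr, ht]
  simp only [cross, vadd_eq_add, add_sub_cancel_right, Prod.smul_fst, Prod.smul_snd, smul_eq_mul]
  ring

lemma Collinear.snd_ne_of_ne {a d f : ℝ × ℝ} (h : Collinear ℝ {a, d, f}) (had : a.2 ≠ d.2)
    (hfd : f ≠ d) : f.2 ≠ d.2 := by
  intro hfd2
  have hcross := h.cross_sub_eq_zero
  simp only [cross, Prod.fst_sub, Prod.snd_sub, hfd2, sub_self, mul_zero, zero_sub,
    neg_eq_zero, mul_eq_zero, sub_eq_zero, had, false_or] at hcross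
  exact hfd (Prod.ext hcross hfd2)

lemma fst_sub_mul_eq_cross {p a d q f : ℝ × ℝ} (hpa : p.2 = a.2)
    (hpq : Collinear ℝ {p, d, q}) (haf : Collinear ℝ {a, d, f}) :
    (p.1 - a.1) * (q.2 - d.2) * (f.2 - d.2) = (a.2 - d.2) * cross (q - d) (f - d) := by
  have hpq := hpq.cross_sub_eq_zero
  have haf := haf.cross_sub_eq_zero
  simp only [cross, Prod.fst_sub, Prod.snd_sub] at hpq haf ⊢
  linear_combination (f.2 - d.2) * hpq - (q.2 - d.2) * haf + (f.2 - d.2) * (q.1 - d.1) * hpa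

lemma cross_mul_cross_sub_cross_mul_cross (u v w z : ℝ × ℝ) :
    cross u w * cross v z - cross u z * cross v w = cross u v * cross w z := by
  simp only [cross]; ring

lemma cross_sub_mul_cross_sub_comm {f₀ f₁ q : ℝ × ℝ} (h : Collinear ℝ {f₀, f₁, q})
    (d e : ℝ × ℝ) :
    cross (q - d) (f₁ - d) * cross (f₀ - e) (f₁ - e) =
      cross (q - e) (f₁ - e) * cross (f₀ - d) (f₁ - d) := by
  linear_combination (norm := (simp only [cross, Prod.fst_sub, Prod.snd_sub]; ring))
    cross_mul_cross_sub_cross_mul_cross (q - f₁) (f₀ - f₁) (f₁ - d) (f₁ - e) -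
      cross (f₁ - d) (f₁ - e) * h.cross_sub_eq_zero

theorem copy_lemma_general (y0 y1 yd : ℝ) (hy0 : y0 ≠ yd)
    (a0 b0 p0 a1 b1 p1 d0 d1 f0 f1 q : ℝ × ℝ)
    (ha0 : a0.2 = y0) (hb0 : b0.2 = y0) (hp0 : p0.2 = y0)
    (ha1 : a1.2 = y1) (hb1 : b1.2 = y1) (hp1 : p1.2 = y1)
    (hd0 : d0.2 = yd) (hd1 : d1.2 = yd)
    (hnc0 : ¬ Collinear ℝ {f0, f1, d0})
    (hc1 : Collinear ℝ {a0, d0, f1}) (hc2 : Collinear ℝ {b0, d0, f0})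
    (hc3 : Collinear ℝ {a1, d1, f1}) (hc4 : Collinear ℝ {b1, d1, f0})
    (hc5 : Collinear ℝ {f0, f1, q}) (hc6 : Collinear ℝ {p0, d0, q})
    (hc7 : Collinear ℝ {q, d1, p1}) :
    (p0.1 - a0.1) * (b1.1 - a1.1) = (p1.1 - a1.1) * (b0.1 - a0.1) := by
  have hy0d : y0 ≠ d0.2 := hd0 ▸ hy0
  have hf1 : f1.2 ≠ yd := hd0 ▸ hc1.snd_ne_of_ne (ha0 ▸ hy0d)
    (by rintro rfl; simp [collinear_pair] at hnc0)
  have hf0 : f0.2 ≠ yd := hd0 ▸ hc2.snd_ne_of_ne (hb0 ▸ hy0d)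
    (by rintro rfl; simp [collinear_pair] at hnc0)
  have hq : q.2 ≠ yd := hd0 ▸ hc6.snd_ne_of_ne (hp0 ▸ hy0d) (by rintro rfl; exact hnc0 hc5)
  have hc7 : Collinear ℝ {p1, d1, q} := by
    rwa [Set.insert_comm, Set.pair_comm, Set.insert_comm]
  have hpa0 := fst_sub_mul_eq_cross (hp0.trans ha0.symm) hc6 hc1
  have hba0 := fst_sub_mul_eq_cross (hb0.trans ha0.symm) hc2 hc1
  have hpa1 := fst_sub_mul_eq_cross (hp1.trans ha1.symm) hc7 hc3
  have hba1 := fst_sub_mul_eq_cross (hb1.trans ha1.symm) hc4 hc3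
  have harea := cross_sub_mul_cross_sub_comm hc5 d0 d1
  rw [hd0] at hpa0 hba0
  rw [hd1] at hpa1 hba1
  have hden : (q.2 - yd) * (f1.2 - yd) * ((f0.2 - yd) * (f1.2 - yd)) ≠ 0 := by
    simp only [ne_eq, mul_eq_zero, sub_eq_zero, not_or]; exact ⟨⟨hq, hf1⟩, hf0, hf1⟩
  have key :
      (p0.1 - a0.1) * (q.2 - yd) * (f1.2 - yd) * ((b1.1 - a1.1) * (f0.2 - yd) * (f1.2 - yd)) =
        (p1.1 - a1.1) * (q.2 - yd) * (f1.2 - yd) * ((b0.1 - a0.1) * (f0.2 - yd) * (f1.2 - yd)) := by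
    rw [hpa0, hba1, hpa1, hba0]
    linear_combination (a0.2 - yd) * (a1.2 - yd) * harea
  exact mul_right_cancel₀ hden (by linear_combination key)

/-- The copy lemma (Lemma 3.3 / lemma:copyLemma): `a₀, b₀, p₀` lie on the horizontal line
`y = y₀`, `a₁, b₁, p₁` on the line `y = y₁`, and the two pivots `d₀, d₁` both lie on the
line `y = y_d` with `y₀ ≠ y_d ≠ y₁`.  If `f₀, f₁` span a line avoiding the pivots, the
endpoint correspondences `a₀ ↦ f₁ ↦ a₁` and `b₀ ↦ f₀ ↦ b₁` hold via the pivots, and `q` is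
the image of `p₀` on the line `f₀f₁` under projection from `d₀` while `p₁` is the image of
`q` under projection from `d₁`, then `p₀` divides `a₀b₀` in the same ratio as `p₁` divides
`a₁b₁`: `(x(p₀) - x(a₀))·(x(b₁) - x(a₁)) = (x(p₁) - x(a₁))·(x(b₀) - x(a₀))`. -/
theorem copy_lemma (y0 y1 yd : ℝ) (hy0 : y0 ≠ yd) (hy1 : y1 ≠ yd)
    (a0 b0 p0 a1 b1 p1 d0 d1 f0 f1 q : ℝ × ℝ)
    (ha0 : a0.2 = y0) (hb0 : b0.2 = y0) (hp0 : p0.2 = y0) (hab0 : a0 ≠ b0)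
    (ha1 : a1.2 = y1) (hb1 : b1.2 = y1) (hp1 : p1.2 = y1) (hab1 : a1 ≠ b1)
    (hd0 : d0.2 = yd) (hd1 : d1.2 = yd)
    (hnc0 : ¬ Collinear ℝ {f0, f1, d0}) (hnc1 : ¬ Collinear ℝ {f0, f1, d1})
    (hc1 : Collinear ℝ {a0, d0, f1}) (hc2 : Collinear ℝ {b0, d0, f0})
    (hc3 : Collinear ℝ {a1, d1, f1}) (hc4 : Collinear ℝ {b1, d1, f0})
    (hc5 : Collinear ℝ {f0, f1, q}) (hc6 : Collinear ℝ {p0, d0, q})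
    (hc7 : Collinear ℝ {q, d1, p1}) :
    (p0.1 - a0.1) * (b1.1 - a1.1) = (p1.1 - a1.1) * (b0.1 - a0.1) :=
  copy_lemma_general y0 y1 yd hy0 a0 b0 p0 a1 b1 p1 d0 d1 f0 f1 q ha0 hb0 hp0 ha1 hb1 hp1 hd0 hd1
    hnc0 hc1 hc2 hc3 hc4 hc5 hc6 hc7
end
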